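/- Let S be a linear subspace of the space of linear endomorphisms of ℝ², with subspaces S_k defined inductively by S₁ = S and S_{k+1} = span{[X, Y] : X ∈ S, Y ∈ S_k}, and let 𝔤 be the Lie algebra (under the commutator bracket) generated by S. Let g₀ be a nondegenerate symmetric bilinear form on ℝ². If S₂ ⊆ 𝔰𝔬(g₀) and S₃ ⊆ 𝔰𝔬(g₀), then the derived algebra 𝔤' = [𝔤, 𝔤] is contained in 𝔰𝔬(g₀). -/

import Mathlib

attribute [local instance 100] LieRing.ofAssociativeRing

/-- Given a linear subspace `S` of a Lie algebra, `lowerSeq S k` is the subspace `S_{k+1}` of the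
inductively defined sequence `S₁ = S`, `S_{k+1} = span {[X, Y] : X ∈ S, Y ∈ S_k}`. -/
def lowerSeq {R L : Type*} [CommRing R] [LieRing L] [LieAlgebra R L]
    (S : Submodule R L) : ℕ → Submodule R L
  | 0 => S
  | k + 1 => Submodule.span R {z | ∃ x ∈ S, ∃ y ∈ lowerSeq S k, z = ⁅x, y⁆}

noncomputable def soSub (g₀ : (Fin 2 → ℝ) →ₗ[ℝ] (Fin 2 → ℝ) →ₗ[ℝ] ℝ) :
    Submodule ℝ (Module.End ℝ (Fin 2 → ℝ)) where
  carrier := {A | ∀ v w : Fin 2 → ℝ, g₀ (A v) w + g₀ v (A w) = 0}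
  add_mem' := by
    intro A B hA hB v w
    simp only [LinearMap.add_apply, map_add, LinearMap.add_apply] at *
    linarith [hA v w, hB v w]
  zero_mem' := by intro v w; simp
  smul_mem' := by
    intro t A hA v w
    simp only [LinearMap.smul_apply, map_smul, LinearMap.smul_apply, smul_eq_mul]
    linear_combination t * hA v w


lemma so2_structure (g₀ : (Fin 2 → ℝ) →ₗ[ℝ] (Fin 2 → ℝ) →ₗ[ℝ] ℝ)
    (hnd : ∀ v : Fin 2 → ℝ, (∀ w : Fin 2 → ℝ, g₀ v w = 0) → v = 0)
    (hsym : ∀ v w : Fin 2 → ℝ, g₀ v w = g₀ w v) :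
    ∃ (M₀ : Module.End ℝ (Fin 2 → ℝ)) (d : ℝ), d ≠ 0 ∧
      ∀ A : Module.End ℝ (Fin 2 → ℝ), (∀ v w, g₀ (A v) w + g₀ v (A w) = 0) →
        ∃ t : ℝ, d • A = t • M₀ := by
  set e0 : Fin 2 → ℝ := ![1, 0] with he0
  set e1 : Fin 2 → ℝ := ![0, 1] with he1
  set a := g₀ e0 e0 with ha
  set b := g₀ e0 e1 with hb
  set c := g₀ e1 e1 with hc
  have hv : ∀ v : Fin 2 → ℝ, v = v 0 • e0 + v 1 • e1 := by
    intro v; funext i; fin_cases i <;> simp [he0, he1]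
  have gval : ∀ u w : Fin 2 → ℝ,
      g₀ u w = u 0 * (w 0 * a + w 1 * b) + u 1 * (w 0 * b + w 1 * c) := by
    intro u w
    have h10 : g₀ e1 e0 = b := hsym e1 e0
    conv_lhs => rw [hv u, hv w]
    simp only [map_add, map_smul, LinearMap.add_apply, LinearMap.smul_apply, smul_eq_mul]
    rw [h10, ← ha, ← hb, ← hc]
    ring
  have hd : a * c - b * b ≠ 0 := by
    intro hd0
    have hbc : (![c, -b] : Fin 2 → ℝ) = 0 := by
      apply hnd
      intro w
      rw [gval]
      simp only [Matrix.cons_val_zero, Matrix.cons_val_one, Matrix.head_cons]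
      linear_combination w 0 * hd0
    have hc0 : c = 0 := by simpa using congrFun hbc 0
    have hb0 : b = 0 := by have := congrFun hbc 1; simp at this; linarith [this]
    have he1z : e1 = 0 := by
      apply hnd
      intro w
      rw [gval]
      simp [he1, hb0, hc0]
    have := congrFun he1z 1
    simp [he1] at this
  refine ⟨Matrix.toLin' !![b, c; -a, -b], a * c - b * b, hd, ?_⟩
  intro A hA
  have h1 : a * A e0 0 + b * A e0 1 = 0 := by
    have h := hA e0 e0
    rw [gval, gval] at h
    simp only [he0, Matrix.cons_val_zero, Matrix.cons_val_one, Matrix.head_cons] at h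
    linarith
  have h2 : b * A e1 0 + c * A e1 1 = 0 := by
    have h := hA e1 e1
    rw [gval, gval] at h
    simp only [he1, Matrix.cons_val_zero, Matrix.cons_val_one, Matrix.head_cons] at h
    linarith
  have h3 : b * A e0 0 + c * A e0 1 + a * A e1 0 + b * A e1 1 = 0 := by
    have h := hA e0 e1
    rw [gval, gval] at h
    simp only [he0, he1, Matrix.cons_val_zero, Matrix.cons_val_one, Matrix.head_cons] at h
    linarith
  refine ⟨a * A e1 0 + b * A e1 1, ?_⟩
  apply LinearMap.ext
  intro v
  have hAv : A v = v 0 • A e0 + v 1 • A e1 := by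
    conv_lhs => rw [hv v]
    rw [map_add, map_smul, map_smul]
  simp only [LinearMap.smul_apply, hAv, Matrix.toLin'_apply]
  funext i
  fin_cases i <;>
    simp only [Pi.smul_apply, Pi.add_apply, smul_eq_mul, Matrix.mulVec, dotProduct,
      Fin.sum_univ_two, Matrix.cons_val', Matrix.cons_val_zero, Matrix.cons_val_one,
      Matrix.head_cons, Matrix.empty_val', Matrix.cons_val_fin_one, Matrix.head_fin_const,
      Matrix.of_apply, Fin.isValue, Fin.zero_eta, Fin.mk_one]
  · linear_combination v 0 * (c * h1 - b * h3) + v 1 * (-b * h2)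
  · linear_combination v 0 * (a * h3 - b * h1) + v 1 * (a * h2)

/-- Let `S` be a linear subspace of the endomorphisms of `ℝ²`, with `S_k` defined inductively
(`S₁ = S`, `S_{k+1} = span {[X, Y] : X ∈ S, Y ∈ S_k}`, so `lowerSeq S k = S_{k+1}`), let `𝔤`
be the Lie algebra generated by `S` and let `g₀` be a nondegenerate symmetric bilinear form on
`ℝ²`. If `S₂ ⊆ 𝔰𝔬(g₀)` and `S₃ ⊆ 𝔰𝔬(g₀)`, then the derived algebra `𝔤' = [𝔤, 𝔤]` is
contained in `𝔰𝔬(g₀)`. -/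
theorem stmt_7 (S : Submodule ℝ (Module.End ℝ (Fin 2 → ℝ)))
    (𝔤 : LieSubalgebra ℝ (Module.End ℝ (Fin 2 → ℝ)))
    (h𝔤 : 𝔤 = LieSubalgebra.lieSpan ℝ (Module.End ℝ (Fin 2 → ℝ)) S)
    (g₀ : (Fin 2 → ℝ) →ₗ[ℝ] (Fin 2 → ℝ) →ₗ[ℝ] ℝ)
    (hnd : ∀ v : Fin 2 → ℝ, (∀ w : Fin 2 → ℝ, g₀ v w = 0) → v = 0)
    (hsym : ∀ v w : Fin 2 → ℝ, g₀ v w = g₀ w v)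
    (hS2 : ∀ A ∈ lowerSeq S 1, ∀ v w : Fin 2 → ℝ, g₀ (A v) w + g₀ v (A w) = 0)
    (hS3 : ∀ A ∈ lowerSeq S 2, ∀ v w : Fin 2 → ℝ, g₀ (A v) w + g₀ v (A w) = 0) :
    ∀ A ∈ Submodule.span ℝ {z | ∃ x ∈ 𝔤, ∃ y ∈ 𝔤, z = ⁅x, y⁆},
      ∀ v w : Fin 2 → ℝ, g₀ (A v) w + g₀ v (A w) = 0 := by
  
  obtain ⟨M₀, d, hd, hstr⟩ := so2_structure g₀ hnd hsym
  have hcomm : ∀ A B : Module.End ℝ (Fin 2 → ℝ), A ∈ soSub g₀ → B ∈ soSub g₀ →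
      ⁅A, B⁆ = 0 := by
    intro A B hA hB
    obtain ⟨t, htA⟩ := hstr A hA
    obtain ⟨u, huB⟩ := hstr B hB
    have hdd : d * d ≠ 0 := mul_ne_zero hd hd
    have hAB : (d * d) • (A * B) = (d * d) • (B * A) := by
      have e1 : (d * d) • (A * B) = (d • A) * (d • B) := by
        rw [smul_mul_assoc, mul_smul_comm, smul_smul]
      have e2 : (d * d) • (B * A) = (d • B) * (d • A) := by
        rw [smul_mul_assoc, mul_smul_comm, smul_smul]
      rw [e1, e2, htA, huB, smul_mul_assoc, mul_smul_comm, smul_mul_assoc, mul_smul_comm,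
        smul_smul, smul_smul, mul_comm t u]
    have hAB' : A * B = B * A := smul_right_injective (Module.End ℝ (Fin 2 → ℝ)) hdd hAB
    rw [Ring.lie_def, hAB', sub_self]
  have hdep : ∀ A J : Module.End ℝ (Fin 2 → ℝ), A ∈ soSub g₀ → J ∈ soSub g₀ → J ≠ 0 →
      ∃ c : ℝ, A = c • J := by
    intro A J hA hJ hJne
    obtain ⟨t, htA⟩ := hstr A hA
    obtain ⟨u, huJ⟩ := hstr J hJ
    have hu : u ≠ 0 := by
      rintro rfl
      rw [zero_smul] at huJ
      exact hJne (by simpa [hd] using smul_eq_zero.mp huJ)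
    refine ⟨t / u, ?_⟩
    have h : d • (u • A) = d • ((t / u) • (u • J)) := by
      rw [smul_comm d u A, htA, smul_comm d _ _, smul_comm _ u, huJ,
        smul_smul, smul_smul, smul_smul]
      congr 1
      field_simp
    have := smul_right_injective (Module.End ℝ (Fin 2 → ℝ)) hd h
    have := smul_right_injective (Module.End ℝ (Fin 2 → ℝ)) hu
      (by rw [this, smul_comm] : u • A = u • ((t/u) • J))
    exact this
  have hS2' : lowerSeq S 1 ≤ soSub g₀ := fun A h => hS2 A h
  have hS3' : lowerSeq S 2 ≤ soSub g₀ := fun A h => hS3 A h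
  have h32 : lowerSeq S 2 ≤ lowerSeq S 1 := by
    by_cases hbot : lowerSeq S 1 = ⊥
    · show Submodule.span ℝ _ ≤ _
      apply Submodule.span_le.2
      rintro z ⟨x, hx, y, hy, rfl⟩
      rw [hbot, Submodule.mem_bot] at hy
      subst hy
      rw [lie_zero]
      exact Submodule.zero_mem _
    · obtain ⟨J, hJmem, hJne⟩ : ∃ J ∈ lowerSeq S 1, J ≠ 0 := by
        by_contra h
        push_neg at h
        exact hbot ((Submodule.eq_bot_iff _).2 h)
      intro z hz
      obtain ⟨c, rfl⟩ := hdep z J (hS3' hz) (hS2' hJmem) hJne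
      exact Submodule.smul_mem _ _ hJmem
  have hM : ∀ x y : Module.End ℝ (Fin 2 → ℝ), x ∈ S ⊔ lowerSeq S 1 →
      y ∈ S ⊔ lowerSeq S 1 → ⁅x, y⁆ ∈ lowerSeq S 1 := by
    intro x y hx hy
    rw [Submodule.mem_sup] at hx hy
    obtain ⟨s, hs, j, hj, rfl⟩ := hx
    obtain ⟨s', hs', j', hj', rfl⟩ := hy
    have hss' : ⁅s, s'⁆ ∈ lowerSeq S 1 := Submodule.subset_span ⟨s, hs, s', hs', rfl⟩
    have hsj' : ⁅s, j'⁆ ∈ lowerSeq S 1 := h32 (Submodule.subset_span ⟨s, hs, j', hj', rfl⟩)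
    have hjs' : ⁅j, s'⁆ ∈ lowerSeq S 1 := by
      have h : ⁅s', j⁆ ∈ lowerSeq S 1 := h32 (Submodule.subset_span ⟨s', hs', j, hj, rfl⟩)
      rw [← lie_skew]
      exact Submodule.neg_mem _ h
    have hjj' : ⁅j, j'⁆ = 0 := hcomm j j' (hS2' hj) (hS2' hj')
    have hexp : ⁅s + j, s' + j'⁆ = ⁅s, s'⁆ + ⁅s, j'⁆ + ⁅j, s'⁆ + ⁅j, j'⁆ := by
      rw [add_lie, lie_add, lie_add]
      abel
    rw [hexp, hjj', add_zero]
    exact Submodule.add_mem _ (Submodule.add_mem _ hss' hsj') hjs'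
  let M' : LieSubalgebra ℝ (Module.End ℝ (Fin 2 → ℝ)) :=
    { (S ⊔ lowerSeq S 1 : Submodule ℝ (Module.End ℝ (Fin 2 → ℝ))) with
      lie_mem' := fun {x y} hx hy => Submodule.mem_sup_right (hM x y hx hy) }
  have hg : 𝔤 ≤ M' := by
    rw [h𝔤]
    apply (LieSubalgebra.lieSpan_le).2
    intro x hx
    exact Submodule.mem_sup_left hx
  intro A hA
  have : A ∈ soSub g₀ := by
    refine Submodule.span_le.2 ?_ hA
    rintro z ⟨x, hx, y, hy, rfl⟩
    exact hS2' (hM x y (hg hx) (hg hy))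
  exact this
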